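/- In the exact WKB recursion, fix z₁∈Ω with Re z₁ > Re z₀, and for a holomorphic function f on Ω define ‖f‖ = sup_{ζ∈[z₀,z₁]} |f(ζ)| + ε sup_{ζ∈[z₀,z₁]} |f'(ζ)|, J(f)(z) = ∫_{[z₀,z]} ℋ(ζ) f(ζ) dζ, and I₊(f)(z) = ∫_{[z₀,z]} e^{2(ζ−z)/ε} ℋ(ζ) f(ζ) dζ. Then there exists a constant C>0, depending on ℋ and the segment [z₀,z₁] but not on ε, such that ‖J(I₊(f))‖ ≤ C ε ‖f‖ for every holomorphic f on Ω and every ε ∈ (0,1]. -/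

import Mathlib

/-!
Since `J g` is a primitive of `ℋ g` on the convex domain, both parts of `‖J(I₊ f)‖` are
controlled by `sup |I₊ f|` on the segment. At `z = z₀ + s(z₁ - z₀)` and `ζ = z₀ + t(z - z₀)` the
weight has modulus `|e^{2(ζ - z)/ε}| = e^{-2s(1 - t) Re(z₁ - z₀)/ε}`, whose integral over
`t ∈ [0, 1]` is at most `ε / (2s Re(z₁ - z₀))`; progressivity makes this finite, and the factor
`s` cancels against `|z - z₀| = s |z₁ - z₀|`. Hence
`sup |I₊ f| ≤ ε |z₁ - z₀| sup |ℋ| sup |f| / (2 Re(z₁ - z₀))`, uniformly in `ε`.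
That `J` produces primitives is proved by differentiating under the integral sign and
integrating by parts in the segment parameter.
-/

open Complex Filter Set intervalIntegral

noncomputable section

/-- Integral of `h` along the straight segment from `z₀` to `z`. -/
def segIntegral (z₀ z : ℂ) (h : ℂ → ℂ) : ℂ :=
  (z - z₀) * ∫ t in (0:ℝ)..1, h (z₀ + (t : ℂ) * (z - z₀))

/-- The operator `J(f)(z) = ∫_{[z₀,z]} ℋ(ζ) f(ζ) dζ`. -/
def wkbJ (H : ℂ → ℂ) (z₀ : ℂ) (f : ℂ → ℂ) (z : ℂ) : ℂ :=
  segIntegral z₀ z fun ζ => H ζ * f ζ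

/-- The operator `I₊(f)(z) = ∫_{[z₀,z]} e^{2(ζ-z)/ε} ℋ(ζ) f(ζ) dζ`. -/
def wkbIplus (H : ℂ → ℂ) (z₀ : ℂ) (ε : ℝ) (f : ℂ → ℂ) (z : ℂ) : ℂ :=
  (z - z₀) * ∫ t in (0:ℝ)..1,
    Complex.exp (2 * ((z₀ + (t : ℂ) * (z - z₀)) - z) / (ε : ℂ)) *
      H (z₀ + (t : ℂ) * (z - z₀)) * f (z₀ + (t : ℂ) * (z - z₀))

/-- The norm `‖f‖ = sup_{[z₀,z₁]} |f| + ε sup_{[z₀,z₁]} |f'|`. -/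
def wkbNorm (ε : ℝ) (z₀ z₁ : ℂ) (f : ℂ → ℂ) : ℝ :=
  sSup ((fun ζ => ‖f ζ‖) '' segment ℝ z₀ z₁) +
    ε * sSup ((fun ζ => ‖deriv f ζ‖) '' segment ℝ z₀ z₁)

open MeasureTheory Metric

lemma segment_eq_image_add_mul_sub (z₀ z₁ : ℂ) :
    segment ℝ z₀ z₁ = (fun t : ℝ => z₀ + (t : ℂ) * (z₁ - z₀)) '' Icc 0 1 := by
  simp only [segment_eq_image', Complex.real_smul]

lemma add_mul_sub_mem_segment {z₀ z₁ : ℂ} {t : ℝ} (ht : t ∈ Icc (0 : ℝ) 1) :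
    z₀ + (t : ℂ) * (z₁ - z₀) ∈ segment ℝ z₀ z₁ := by
  rw [segment_eq_image_add_mul_sub]
  exact mem_image_of_mem _ ht

lemma isCompact_segment (z₀ z₁ : ℂ) : IsCompact (segment ℝ z₀ z₁) := by
  rw [segment_eq_image_add_mul_sub]
  exact isCompact_Icc.image (by fun_prop)

lemma uIoc_zero_one_subset_Icc : uIoc (0 : ℝ) 1 ⊆ Icc 0 1 :=
  uIoc_subset_uIcc.trans (uIcc_of_le zero_le_one).subset

lemma norm_segIntegral_le {z₀ z : ℂ} {h : ℂ → ℂ} {K : ℝ}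
    (hK : ∀ ζ ∈ segment ℝ z₀ z, ‖h ζ‖ ≤ K) : ‖segIntegral z₀ z h‖ ≤ ‖z - z₀‖ * K := by
  have hI := norm_integral_le_of_norm_le_const (a := 0) (b := 1) fun t ht =>
    hK _ (add_mul_sub_mem_segment (z₁ := z) (uIoc_zero_one_subset_Icc ht))
  rw [segIntegral, norm_mul]
  gcongr
  simpa using hI

lemma integral_exp_mul_sub_one_le {c : ℝ} (hc : 0 < c) :
    ∫ t in (0 : ℝ)..1, Real.exp (c * (t - 1)) ≤ 1 / c := by
  have hval : ∫ t in (0 : ℝ)..1, Real.exp (c * (t - 1)) = (1 - Real.exp (-c)) / c := by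
    simp only [mul_sub, mul_one, integral_comp_mul_sub (fun x => Real.exp x) hc.ne', integral_exp]
    simp [div_eq_inv_mul]
  rw [hval]
  gcongr
  linarith [Real.exp_pos (-c)]

lemma wkbIplus_eq_segIntegral (H : ℂ → ℂ) (z₀ : ℂ) (ε : ℝ) (f : ℂ → ℂ) (z : ℂ) :
    wkbIplus H z₀ ε f z = segIntegral z₀ z fun ζ => exp (2 * (ζ - z) / ε) * (H ζ * f ζ) := by
  simp only [wkbIplus, segIntegral, mul_assoc]

lemma norm_segIntegral_exp_mul_le {z₀ z : ℂ} {ε K : ℝ} {φ : ℂ → ℂ} (hε : 0 < ε)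
    (hre : 0 < (z - z₀).re) (hK : ∀ ζ ∈ segment ℝ z₀ z, ‖φ ζ‖ ≤ K) :
    ‖segIntegral z₀ z fun ζ => exp (2 * (ζ - z) / ε) * φ ζ‖ ≤
      ε * ‖z - z₀‖ / (2 * (z - z₀).re) * K := by
  set c := 2 * (z - z₀).re / ε
  have hc : 0 < c := by positivity
  have hK0 : 0 ≤ K := (norm_nonneg _).trans (hK z₀ (left_mem_segment ℝ z₀ z))
  have hweight : ∀ t : ℝ, (2 * (z₀ + t * (z - z₀) - z) / ε).re = c * (t - 1) := by
    intro t
    have : 2 * (z₀ + t * (z - z₀) - z) / ε = ((2 * (t - 1) / ε : ℝ) : ℂ) * (z - z₀) := by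
      push_cast; ring
    rw [this, re_ofReal_mul]
    ring
  have hpoint : ∀ t ∈ Ioc (0 : ℝ) 1,
      ‖exp (2 * (z₀ + t * (z - z₀) - z) / ε) * φ (z₀ + t * (z - z₀))‖ ≤
        Real.exp (c * (t - 1)) * K := fun t ht => by
    rw [norm_mul, norm_exp, hweight]
    gcongr
    exact hK _ (add_mul_sub_mem_segment (Ioc_subset_Icc_self ht))
  have hI := intervalIntegral.norm_integral_le_of_norm_le zero_le_one (ae_of_all volume hpoint)
    ((by fun_prop : Continuous fun t : ℝ => Real.exp (c * (t - 1)) * K).intervalIntegrable 0 1)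
  rw [intervalIntegral.integral_mul_const] at hI
  calc ‖segIntegral z₀ z fun ζ => exp (2 * (ζ - z) / ε) * φ ζ‖
      ≤ ‖z - z₀‖ * ((1 / c) * K) := by
        rw [segIntegral, norm_mul]
        gcongr
        exact hI.trans (by gcongr; exact integral_exp_mul_sub_one_le hc)
    _ = ε * ‖z - z₀‖ / (2 * (z - z₀).re) * K := by
        simp only [c]
        field_simp

lemma norm_wkbIplus_le {H f : ℂ → ℂ} {z₀ z₁ z : ℂ} {ε K : ℝ} (hε : 0 < ε)
    (hprog : z₀.re < z₁.re) (hK : ∀ ζ ∈ segment ℝ z₀ z₁, ‖H ζ * f ζ‖ ≤ K)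
    (hz : z ∈ segment ℝ z₀ z₁) :
    ‖wkbIplus H z₀ ε f z‖ ≤ ε * ‖z₁ - z₀‖ / (2 * (z₁ - z₀).re) * K := by
  have hre : 0 < (z₁ - z₀).re := by rw [sub_re]; linarith
  have hK0 : 0 ≤ K := (norm_nonneg _).trans (hK z₀ (left_mem_segment ℝ z₀ z₁))
  rw [segment_eq_image_add_mul_sub] at hz
  obtain ⟨s, hs, rfl⟩ := hz
  rcases hs.1.eq_or_lt with rfl | hs0
  · simp only [wkbIplus, ofReal_zero, zero_mul, add_sub_cancel_left, zero_mul, norm_zero]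
    positivity
  have hsub : z₀ + (s : ℂ) * (z₁ - z₀) - z₀ = (s : ℂ) * (z₁ - z₀) := by ring
  have hbound := norm_segIntegral_exp_mul_le (φ := fun ζ => H ζ * f ζ) hε
    (by rw [hsub, re_ofReal_mul]; positivity)
    fun ζ hζ => hK ζ ((convex_segment z₀ z₁).segment_subset (left_mem_segment ℝ z₀ z₁)
      (add_mul_sub_mem_segment hs) hζ)
  rw [wkbIplus_eq_segIntegral]
  refine hbound.trans (le_of_eq ?_)
  rw [hsub, norm_mul, norm_real, Real.norm_of_nonneg hs.1, re_ofReal_mul]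
  field_simp

section SegmentPrimitive

variable {Ω : Set ℂ} {h : ℂ → ℂ} {z₀ z : ℂ}

lemma hasDerivAt_comp_segment {w : ℂ} {t : ℝ} (hh : DifferentiableAt ℂ h (z₀ + t * (w - z₀))) :
    HasDerivAt (fun s : ℝ => h (z₀ + s * (w - z₀))) (deriv h (z₀ + t * (w - z₀)) * (w - z₀)) t := by
  have hline : HasDerivAt (fun u : ℂ => z₀ + u * (w - z₀)) (w - z₀) t := by
    simpa using ((hasDerivAt_id (t : ℂ)).mul_const (w - z₀)).const_add z₀
  exact (hh.hasDerivAt.comp (t : ℂ) hline).comp_ofReal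

lemma continuousOn_comp_segment {φ : ℂ → ℂ} {s : Set ℂ} (hφ : ContinuousOn φ s) {w : ℂ}
    (hγ : ∀ t ∈ Icc (0 : ℝ) 1, z₀ + t * (w - z₀) ∈ s) :
    ContinuousOn (fun t : ℝ => φ (z₀ + t * (w - z₀))) (Icc 0 1) :=
  hφ.comp (by fun_prop) hγ

/-- Integration by parts of `∫₀¹ t · d/dt h(z₀ + t(z - z₀)) dt`. -/
lemma integral_comp_segment_add_integral_deriv (hΩ : IsOpen Ω) (hh : DifferentiableOn ℂ h Ω)
    (hseg : segment ℝ z₀ z ⊆ Ω) :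
    (∫ t in (0 : ℝ)..1, h (z₀ + t * (z - z₀))) +
      (z - z₀) * ∫ t in (0 : ℝ)..1, deriv h (z₀ + t * (z - z₀)) * t = h z := by
  have hγ : ∀ t ∈ Icc (0 : ℝ) 1, z₀ + t * (z - z₀) ∈ Ω := fun t ht =>
    hseg (add_mul_sub_mem_segment ht)
  have hparts := integral_mul_deriv_eq_deriv_mul (a := 0) (b := 1) (u := fun t : ℝ => (t : ℂ))
    (u' := fun _ => 1) (v' := fun t => deriv h (z₀ + t * (z - z₀)) * (z - z₀))
    (fun t _ => hasDerivAt_id (t : ℂ) |>.comp_ofReal)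
    (fun t ht => hasDerivAt_comp_segment
      (hh.differentiableAt (hΩ.mem_nhds (hγ t (uIcc_of_le (zero_le_one' ℝ) ▸ ht)))))
    intervalIntegrable_const
    (((continuousOn_comp_segment ((hh.deriv hΩ).continuousOn) hγ).mul continuousOn_const)
      |>.intervalIntegrable_of_Icc zero_le_one)
  have hmul : (∫ t in (0 : ℝ)..1, (t : ℂ) * (deriv h (z₀ + t * (z - z₀)) * (z - z₀))) =
      (z - z₀) * ∫ t in (0 : ℝ)..1, deriv h (z₀ + t * (z - z₀)) * t := by
    rw [← intervalIntegral.integral_const_mul]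
    exact intervalIntegral.integral_congr fun t _ => by ring
  rw [← hmul, hparts]
  simp

lemma hasDerivAt_integral_comp_segment (hΩ : IsOpen Ω) (hh : DifferentiableOn ℂ h Ω)
    (hseg : segment ℝ z₀ z ⊆ Ω) :
    HasDerivAt (fun w => ∫ t in (0 : ℝ)..1, h (z₀ + t * (w - z₀)))
      (∫ t in (0 : ℝ)..1, deriv h (z₀ + t * (z - z₀)) * t) z := by
  obtain ⟨δ, hδ, hKΩ⟩ := (isCompact_segment z₀ z).exists_cthickening_subset_open hΩ hseg
  set K := cthickening δ (segment ℝ z₀ z)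
  have hγK : ∀ w ∈ ball z δ, ∀ t ∈ Icc (0 : ℝ) 1, z₀ + t * (w - z₀) ∈ K := by
    intro w hw t ht
    refine mem_cthickening_of_dist_le _ _ δ _ (add_mul_sub_mem_segment ht) ?_
    have : z₀ + t * (w - z₀) - (z₀ + t * (z - z₀)) = t * (w - z) := by ring
    rw [dist_eq_norm, this, norm_mul, norm_real, Real.norm_of_nonneg ht.1, ← dist_eq_norm]
    nlinarith [mem_ball.mp hw, ht.2, dist_nonneg (x := w) (y := z)]
  have hhK : ContinuousOn h K := hh.continuousOn.mono hKΩ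
  have hh'K : ContinuousOn (deriv h) K := (hh.deriv hΩ).continuousOn.mono hKΩ
  obtain ⟨C, hC⟩ := (isCompact_segment z₀ z).cthickening.exists_bound_of_continuousOn hh'K
  have hz : z ∈ ball z δ := mem_ball_self hδ
  refine (intervalIntegral.hasDerivAt_integral_of_dominated_loc_of_deriv_le (μ := volume)
    (F := fun w (t : ℝ) => h (z₀ + t * (w - z₀)))
    (F' := fun w (t : ℝ) => deriv h (z₀ + t * (w - z₀)) * t) (bound := fun _ => C)
    (ball_mem_nhds z hδ) ?_ ?_ ?_ ?_ intervalIntegrable_const ?_).2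
  · filter_upwards [ball_mem_nhds z hδ] with w hw
    exact ((continuousOn_comp_segment hhK (hγK w hw)).mono uIoc_zero_one_subset_Icc)
      |>.aestronglyMeasurable measurableSet_uIoc
  · exact (continuousOn_comp_segment hhK (hγK z hz)).intervalIntegrable_of_Icc zero_le_one
  · exact (((continuousOn_comp_segment hh'K (hγK z hz)).mul (by fun_prop)).mono
      uIoc_zero_one_subset_Icc).aestronglyMeasurable measurableSet_uIoc
  · refine ae_of_all _ fun t ht w hw => ?_
    have ht' := uIoc_zero_one_subset_Icc ht
    rw [norm_mul, norm_real, Real.norm_of_nonneg ht'.1]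
    nlinarith [hC _ (hγK w hw t ht'), ht'.2, norm_nonneg (deriv h (z₀ + t * (w - z₀)))]
  · refine ae_of_all _ fun t ht w hw => ?_
    have hline : HasDerivAt (fun u : ℂ => z₀ + t * (u - z₀)) (t : ℂ) w := by
      simpa using ((hasDerivAt_id w).sub_const z₀).const_mul (t : ℂ) |>.const_add z₀
    have hγ := hKΩ (hγK w hw t (uIoc_zero_one_subset_Icc ht))
    exact (hh.differentiableAt (hΩ.mem_nhds hγ)).hasDerivAt.comp w hline

theorem hasDerivAt_segIntegral (hΩ : IsOpen Ω) (hh : DifferentiableOn ℂ h Ω)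
    (hseg : segment ℝ z₀ z ⊆ Ω) :
    HasDerivAt (fun w => segIntegral z₀ w h) (h z) z := by
  have hprod := ((hasDerivAt_id z).sub_const z₀).mul
    (hasDerivAt_integral_comp_segment hΩ hh hseg)
  rwa [id, one_mul, integral_comp_segment_add_integral_deriv hΩ hh hseg] at hprod

theorem differentiableOn_segIntegral (hΩ : IsOpen Ω) (hΩconv : Convex ℝ Ω)
    (hh : DifferentiableOn ℂ h Ω) (hz₀ : z₀ ∈ Ω) :
    DifferentiableOn ℂ (fun w => segIntegral z₀ w h) Ω := fun _ hw =>
  (hasDerivAt_segIntegral hΩ hh (hΩconv.segment_subset hz₀ hw)).hasDerivWithinAt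
    |>.differentiableWithinAt

end SegmentPrimitive

lemma differentiableOn_wkbIplus {Ω : Set ℂ} (hΩ : IsOpen Ω) (hΩconv : Convex ℝ Ω)
    {H f : ℂ → ℂ} (hH : DifferentiableOn ℂ H Ω) (hf : DifferentiableOn ℂ f Ω)
    {z₀ : ℂ} (hz₀ : z₀ ∈ Ω) (ε : ℝ) :
    DifferentiableOn ℂ (wkbIplus H z₀ ε f) Ω := by
  -- the weight `e^{2(ζ - z)/ε}` depends on `z`; splitting off `e^{-2z/ε}` leaves a primitive
  have hfactor : wkbIplus H z₀ ε f = fun z =>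
      exp (-(2 * z / ε)) * segIntegral z₀ z fun ζ => exp (2 * ζ / ε) * (H ζ * f ζ) := by
    funext z
    rw [wkbIplus_eq_segIntegral, segIntegral, segIntegral, mul_left_comm (exp _)]
    congr 1
    rw [← intervalIntegral.integral_const_mul]
    refine intervalIntegral.integral_congr fun t _ => ?_
    rw [show 2 * (z₀ + t * (z - z₀) - z) / ε = -(2 * z / ε) + 2 * (z₀ + t * (z - z₀)) / ε by
      ring, exp_add]
    ring
  rw [hfactor]
  refine (by fun_prop : Differentiable ℂ fun z : ℂ => exp (-(2 * z / ε))).differentiableOn.mul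
    (differentiableOn_segIntegral hΩ hΩconv ?_ hz₀)
  exact (by fun_prop : Differentiable ℂ fun ζ : ℂ => exp (2 * ζ / ε)).differentiableOn.mul
    (hH.mul hf)

lemma norm_le_wkbNorm {ε : ℝ} {z₀ z₁ ζ : ℂ} {f : ℂ → ℂ} (hε : 0 ≤ ε)
    (hf : ContinuousOn f (segment ℝ z₀ z₁)) (hζ : ζ ∈ segment ℝ z₀ z₁) :
    ‖f ζ‖ ≤ wkbNorm ε z₀ z₁ f := by
  have hbdd := ((isCompact_segment z₀ z₁).image_of_continuousOn hf.norm).bddAbove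
  have hderiv : 0 ≤ sSup ((fun ζ => ‖deriv f ζ‖) '' segment ℝ z₀ z₁) :=
    Real.sSup_nonneg (by rintro _ ⟨_, _, rfl⟩; exact norm_nonneg _)
  have := le_csSup hbdd (mem_image_of_mem _ hζ)
  rw [wkbNorm]
  nlinarith

lemma wkbNorm_le {ε A A' : ℝ} {z₀ z₁ : ℂ} {F : ℂ → ℂ} (hε : 0 ≤ ε)
    (hF : ∀ ζ ∈ segment ℝ z₀ z₁, ‖F ζ‖ ≤ A) (hF' : ∀ ζ ∈ segment ℝ z₀ z₁, ‖deriv F ζ‖ ≤ A') :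
    wkbNorm ε z₀ z₁ F ≤ A + ε * A' := by
  have hne : (segment ℝ z₀ z₁).Nonempty := ⟨z₀, left_mem_segment ℝ z₀ z₁⟩
  rw [wkbNorm]
  gcongr
  · exact csSup_le (hne.image _) (by rintro _ ⟨ζ, hζ, rfl⟩; exact hF ζ hζ)
  · exact csSup_le (hne.image _) (by rintro _ ⟨ζ, hζ, rfl⟩; exact hF' ζ hζ)

lemma wkbNorm_segIntegral_le {Ω : Set ℂ} (hΩ : IsOpen Ω) (hΩconv : Convex ℝ Ω) {h : ℂ → ℂ}
    (hh : DifferentiableOn ℂ h Ω) {z₀ z₁ : ℂ} (hz₀ : z₀ ∈ Ω) (hz₁ : z₁ ∈ Ω) {ε K : ℝ}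
    (hε : 0 ≤ ε) (hK : ∀ ζ ∈ segment ℝ z₀ z₁, ‖h ζ‖ ≤ K) :
    wkbNorm ε z₀ z₁ (fun z => segIntegral z₀ z h) ≤ (‖z₁ - z₀‖ + ε) * K := by
  have hK0 : 0 ≤ K := (norm_nonneg _).trans (hK z₀ (left_mem_segment ℝ z₀ z₁))
  rw [add_mul]
  refine wkbNorm_le hε (fun ζ hζ => ?_) (fun ζ hζ => ?_)
  · refine (norm_segIntegral_le fun ξ hξ => hK ξ ?_).trans ?_
    · exact (convex_segment z₀ z₁).segment_subset (left_mem_segment ℝ z₀ z₁) hζ hξ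
    · gcongr
      exact norm_sub_le_of_mem_segment hζ
  · have hζΩ := hΩconv.segment_subset hz₀ hz₁ hζ
    rw [(hasDerivAt_segIntegral hΩ hh (hΩconv.segment_subset hz₀ hζΩ)).deriv]
    exact hK ζ hζ

theorem wkb_J_Iplus_bound_general
    (Ω : Set ℂ) (hΩopen : IsOpen Ω)
    (hΩconv : Convex ℝ Ω)
    (H : ℂ → ℂ) (hH : DifferentiableOn ℂ H Ω)
    (hHbdd : ∃ M, ∀ ζ ∈ Ω, ‖H ζ‖ ≤ M)
    (z₀ z₁ : ℂ) (hz₀ : z₀ ∈ Ω) (hz₁ : z₁ ∈ Ω) (hprog : z₀.re < z₁.re) :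
    ∃ C : ℝ, 0 < C ∧
      ∀ ε : ℝ, 0 < ε → ε ≤ 1 →
      ∀ f : ℂ → ℂ, DifferentiableOn ℂ f Ω →
        wkbNorm ε z₀ z₁ (wkbJ H z₀ (wkbIplus H z₀ ε f)) ≤
          C * ε * wkbNorm ε z₀ z₁ f := by
  obtain ⟨M₀, hM₀⟩ := hHbdd
  set M := max M₀ 1
  have hM : ∀ ζ ∈ Ω, ‖H ζ‖ ≤ M := fun ζ hζ => (hM₀ ζ hζ).trans (le_max_left _ _)
  have hM1 : 1 ≤ M := le_max_right _ _
  set L := ‖z₁ - z₀‖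
  set a := (z₁ - z₀).re
  have ha : 0 < a := by simp only [a, sub_re]; linarith
  have hL : 0 < L := ha.trans_le (re_le_norm _)
  have hseg : segment ℝ z₀ z₁ ⊆ Ω := hΩconv.segment_subset hz₀ hz₁
  refine ⟨L * (L + 1) * M ^ 2 / (2 * a), by positivity, fun ε hε hε1 f hf => ?_⟩
  set N := wkbNorm ε z₀ z₁ f
  have hHf : ∀ ζ ∈ segment ℝ z₀ z₁, ‖H ζ * f ζ‖ ≤ M * N := fun ζ hζ =>
    norm_mul_le_of_le (hM ζ (hseg hζ)) (norm_le_wkbNorm hε.le (hf.continuousOn.mono hseg) hζ)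
  have hN : 0 ≤ N := by nlinarith [norm_nonneg (H z₀ * f z₀), hHf z₀ (left_mem_segment ℝ z₀ z₁)]
  have hHg : ∀ ζ ∈ segment ℝ z₀ z₁,
      ‖H ζ * wkbIplus H z₀ ε f ζ‖ ≤ M * (ε * L / (2 * a) * (M * N)) := fun ζ hζ =>
    norm_mul_le_of_le (hM ζ (hseg hζ)) (norm_wkbIplus_le hε hprog hHf hζ)
  calc wkbNorm ε z₀ z₁ (wkbJ H z₀ (wkbIplus H z₀ ε f))
      ≤ (L + ε) * (M * (ε * L / (2 * a) * (M * N))) := wkbNorm_segIntegral_le hΩopen hΩconv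
        (hH.mul (differentiableOn_wkbIplus hΩopen hΩconv hH hf hz₀ ε)) hz₀ hz₁ hε.le hHg
    _ ≤ (L + 1) * (M * (ε * L / (2 * a) * (M * N))) := by gcongr
    _ = L * (L + 1) * M ^ 2 / (2 * a) * ε * N := by field_simp

/-- Along a progressive segment (`Re z₁ > Re z₀`), the composed
operator `J ∘ I₊` is bounded by `Cε` in the norm `‖·‖`, uniformly in `ε ∈ (0,1]`. -/
theorem wkb_J_Iplus_bound
    (Ω : Set ℂ) (hΩopen : IsOpen Ω) (hΩbdd : Bornology.IsBounded Ω)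
    (hΩconv : Convex ℝ Ω)
    (H : ℂ → ℂ) (hH : DifferentiableOn ℂ H Ω)
    (hHbdd : ∃ M, ∀ ζ ∈ Ω, ‖H ζ‖ ≤ M)
    (z₀ z₁ : ℂ) (hz₀ : z₀ ∈ Ω) (hz₁ : z₁ ∈ Ω) (hprog : z₀.re < z₁.re) :
    ∃ C : ℝ, 0 < C ∧
      ∀ ε : ℝ, 0 < ε → ε ≤ 1 →
      ∀ f : ℂ → ℂ, DifferentiableOn ℂ f Ω →
        wkbNorm ε z₀ z₁ (wkbJ H z₀ (wkbIplus H z₀ ε f)) ≤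
          C * ε * wkbNorm ε z₀ z₁ f :=
  wkb_J_Iplus_bound_general Ω hΩopen hΩconv H hH hHbdd z₀ z₁ hz₀ hz₁ hprog
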